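/- Let G be an n-edge-coloured multigraph in which each colour class is a matching of size at least n + 20 n^{15/16}, with n sufficiently large. Assume (as a black box) that every n-edge-coloured multigraph whose colour classes are matchings of size at least n + 20n^{7/8} contains a rainbow matching of size at least n - 20 n^{7/8}. Then G contains a full rainbow matching using all n colours. -/

import Mathlib

open Finset
open scoped Classical

section Defs

variable {V C E : Type*}

/-- The two endpoints of an edge of a multigraph given by endpoint functions `e₁ e₂`. -/
def edgeEnds [DecidableEq V] (e₁ e₂ : E → V) (e : E) : Finset V := {e₁ e, e₂ e}

/-- A finite set of edges is a matching: all edges are non-loops and pairwise vertex-disjoint. -/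
def IsMatchingE [DecidableEq V] (e₁ e₂ : E → V) (M : Finset E) : Prop :=
  (∀ e ∈ M, e₁ e ≠ e₂ e) ∧
  ∀ a ∈ M, ∀ b ∈ M, a ≠ b → Disjoint (edgeEnds e₁ e₂ a) (edgeEnds e₁ e₂ b)

/-- A set of edges is rainbow: all its edges have pairwise distinct colours. -/
def IsRainbow (col : E → C) (M : Finset E) : Prop := Set.InjOn col ↑M

/-- The colour class of colour `c`: the set of all edges of colour `c`. -/
noncomputable def colourClass [Fintype E] (col : E → C) (c : C) : Finset E :=
  Finset.univ.filter fun e => col e = c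

/-- The set of vertices covered by a set of edges `M`. -/
def matchedVerts [DecidableEq V] (e₁ e₂ : E → V) (M : Finset E) : Finset V :=
  M.biUnion (edgeEnds e₁ e₂)

/-- The set of vertices spanned by the colour class of `c`
(i.e. incident to at least one edge of colour `c`). -/
noncomputable def spannedVerts [Fintype V] [DecidableEq V] [Fintype E]
    (e₁ e₂ : E → V) (col : E → C) (c : C) : Finset V :=
  Finset.univ.filter fun v => ∃ e, col e = c ∧ (e₁ e = v ∨ e₂ e = v)

/-- `u` and `v` are distinct vertices joined by an edge of colour `c`. -/
def adjOfColour (e₁ e₂ : E → V) (col : E → C) (c : C) (u v : V) : Prop :=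
  u ≠ v ∧ ∃ e, col e = c ∧ ((e₁ e = u ∧ e₂ e = v) ∨ (e₁ e = v ∧ e₂ e = u))

/-- The colour class of `c` is a vertex-disjoint union of (non-trivial) cliques:
whenever `uv` and `vw` are edges of colour `c` with `u ≠ w`, also `uw` is an
edge of colour `c`. -/
def IsCliqueUnion (e₁ e₂ : E → V) (col : E → C) (c : C) : Prop :=
  ∀ u v w, adjOfColour e₁ e₂ col c u v → adjOfColour e₁ e₂ col c v w → u ≠ w →
    adjOfColour e₁ e₂ col c u w

end Defs

/-!
Put `x = n^{1/16}` and let `S` contain each vertex independently with probability `7 / x`.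
Since a colour class is a matching, the events "`e` lies inside `S`" (probability `49 / x²`) and
"`e` meets `S`" (probability below `14 / x`) are independent over the edges of one colour, so
Chernoff bounds and a union bound over the `n = x^16` colours give an `S` such that every colour
has at least `41 x^14` edges inside `S` and at least `n + 20 x^14` edges avoiding `S`. The weak
result in `G - S` yields a rainbow matching missing at most `20 x^14` colours, and these are added
greedily with edges inside `S`: the at most `40 x^14` vertices used so far block at most that many
of the `41 x^14` edges of each colour available there.
-/

section Sampling

variable {V : Type*} {p : ℝ}

/-- The expectation of `f T` for the random subset `T ⊆ A` that contains each element of `A`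
independently with probability `p`. -/
noncomputable def sampleExp (p : ℝ) (A : Finset V) (f : Finset V → ℝ) : ℝ :=
  ∑ T ∈ A.powerset, p ^ #T * (1 - p) ^ (#A - #T) * f T

noncomputable def sampleProb (p : ℝ) (A : Finset V) (P : Finset V → Prop) [DecidablePred P] : ℝ :=
  sampleExp p A fun T => if P T then 1 else 0

lemma sampleExp_empty (f : Finset V → ℝ) : sampleExp p ∅ f = f ∅ := by
  simp [sampleExp]

lemma sampleExp_insert [DecidableEq V] {a : V} {A : Finset V} (ha : a ∉ A) (f : Finset V → ℝ) :
    sampleExp p (insert a A) f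
      = p * sampleExp p A (fun T => f (insert a T)) + (1 - p) * sampleExp p A f := by
  unfold sampleExp
  rw [sum_powerset_insert ha, mul_sum, mul_sum, add_comm, card_insert_of_notMem ha]
  congr 1 <;> refine sum_congr rfl fun T hT => ?_
  · have hTA := mem_powerset.mp hT
    rw [card_insert_of_notMem fun h => ha (hTA h), Nat.add_sub_add_right, pow_succ]
    ring
  · rw [Nat.sub_add_comm (card_le_card (mem_powerset.mp hT)), pow_succ]
    ring

lemma sampleExp_congr {A : Finset V} {f g : Finset V → ℝ} (h : ∀ T ⊆ A, f T = g T) :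
    sampleExp p A f = sampleExp p A g :=
  sum_congr rfl fun T hT => by rw [h T (mem_powerset.mp hT)]

lemma sampleExp_const (A : Finset V) (c : ℝ) : sampleExp p A (fun _ => c) = c := by
  induction A using Finset.induction with
  | empty => exact sampleExp_empty _
  | insert a A ha ih => rw [sampleExp_insert ha, ih]; ring

lemma sampleExp_mul_const (A : Finset V) (f : Finset V → ℝ) (c : ℝ) :
    sampleExp p A (fun T => f T * c) = sampleExp p A f * c := by
  simp only [sampleExp, sum_mul, mul_assoc]

lemma sampleExp_const_mul (A : Finset V) (f : Finset V → ℝ) (c : ℝ) :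
    sampleExp p A (fun T => c * f T) = c * sampleExp p A f := by
  simp only [sampleExp, mul_sum, mul_left_comm]

lemma sampleExp_add (A : Finset V) (f g : Finset V → ℝ) :
    sampleExp p A (fun T => f T + g T) = sampleExp p A f + sampleExp p A g := by
  simp only [sampleExp, mul_add, sum_add_distrib]

lemma sampleExp_sum (A : Finset V) {ι : Type*} (s : Finset ι) (f : ι → Finset V → ℝ) :
    sampleExp p A (fun T => ∑ i ∈ s, f i T) = ∑ i ∈ s, sampleExp p A (f i) := by
  simp only [sampleExp, mul_sum]
  exact sum_comm

lemma sampleExp_mono (hp₀ : 0 ≤ p) (hp₁ : p ≤ 1) {A : Finset V} {f g : Finset V → ℝ}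
    (h : ∀ T ⊆ A, f T ≤ g T) : sampleExp p A f ≤ sampleExp p A g :=
  sum_le_sum fun T hT => mul_le_mul_of_nonneg_left (h T (mem_powerset.mp hT))
    (mul_nonneg (pow_nonneg hp₀ _) (pow_nonneg (sub_nonneg.mpr hp₁) _))

lemma sampleExp_nonneg (hp₀ : 0 ≤ p) (hp₁ : p ≤ 1) {A : Finset V} {f : Finset V → ℝ}
    (h : ∀ T ⊆ A, 0 ≤ f T) : 0 ≤ sampleExp p A f :=
  (sampleExp_const (p := p) A 0).symm.le.trans (sampleExp_mono hp₀ hp₁ h)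

/-- Fubini: a `p`-random subset of `A ∪ B` is the union of independent ones of `A` and `B`. -/
lemma sampleExp_union [DecidableEq V] {A B : Finset V} (hAB : Disjoint A B) (f : Finset V → ℝ) :
    sampleExp p (A ∪ B) f = sampleExp p A (fun T => sampleExp p B (fun U => f (T ∪ U))) := by
  induction A using Finset.induction generalizing f with
  | empty =>
    rw [empty_union, sampleExp_empty]
    simp only [empty_union]
  | insert a A ha ih =>
    rw [disjoint_insert_left] at hAB
    rw [insert_union, sampleExp_insert (by simp [ha, hAB.1]), sampleExp_insert ha,
      ih hAB.2, ih hAB.2]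
    simp only [insert_union]

lemma sampleExp_union_mul [DecidableEq V] {A B : Finset V} (hAB : Disjoint A B)
    (f g : Finset V → ℝ) :
    sampleExp p (A ∪ B) (fun T => f (T ∩ A) * g (T ∩ B)) = sampleExp p A f * sampleExp p B g := by
  rw [sampleExp_union hAB, ← sampleExp_mul_const]
  refine sampleExp_congr fun T hT => ?_
  rw [← sampleExp_const_mul]
  refine sampleExp_congr fun U hU => ?_
  rw [union_inter_distrib_right, union_inter_distrib_right, inter_eq_left.mpr hT,
    inter_eq_left.mpr hU, disjoint_iff_inter_eq_empty.mp (hAB.mono_left hT),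
    disjoint_iff_inter_eq_empty.mp (hAB.symm.mono_left hU), union_empty, empty_union]

lemma sampleExp_prod_inter [DecidableEq V] {ι : Type*} (K : Finset ι) {A : Finset V}
    {B : ι → Finset V} (hBA : ∀ i ∈ K, B i ⊆ A) (hB : (K : Set ι).PairwiseDisjoint B)
    (g : ι → Finset V → ℝ) :
    sampleExp p A (fun T => ∏ i ∈ K, g i (T ∩ B i)) = ∏ i ∈ K, sampleExp p (B i) (g i) := by
  induction K using Finset.induction generalizing A with
  | empty => simp only [prod_empty, sampleExp_const]
  | insert i K hi ih =>
    have hKA : ∀ j ∈ K, B j ⊆ A \ B i := fun j hj => subset_sdiff.mpr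
      ⟨hBA j (mem_insert_of_mem hj),
        hB (by simp [hj]) (by simp) fun h => hi (h ▸ hj)⟩
    rw [prod_insert hi, ← ih hKA (hB.subset (by simp)), ← sampleExp_union_mul sdiff_disjoint.symm,
      union_sdiff_of_subset (hBA i (mem_insert_self i K))]
    refine sampleExp_congr fun T _ => ?_
    rw [prod_insert hi]
    congr 1
    refine prod_congr rfl fun j hj => ?_
    rw [inter_assoc, inter_eq_right.mpr (hKA j hj)]

lemma sampleExp_pair [DecidableEq V] {u v : V} (huv : u ≠ v) (f : Finset V → ℝ) :
    sampleExp p {u, v} f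
      = p ^ 2 * f {u, v} + p * (1 - p) * f {u} + (1 - p) * p * f {v} + (1 - p) ^ 2 * f ∅ := by
  rw [sampleExp_insert (by simpa using huv), ← insert_empty_eq v, sampleExp_insert (notMem_empty v),
    sampleExp_insert (notMem_empty v)]
  simp only [sampleExp_empty, insert_empty_eq]
  ring

lemma sampleProb_le_sampleExp (hp₀ : 0 ≤ p) (hp₁ : p ≤ 1) {A : Finset V} {P : Finset V → Prop}
    [DecidablePred P] {g : Finset V → ℝ} (hg₀ : ∀ T, 0 ≤ g T) (hg : ∀ T, P T → 1 ≤ g T) :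
    sampleProb p A P ≤ sampleExp p A g :=
  sampleExp_mono hp₀ hp₁ fun T _ => by split_ifs with h; exacts [hg T h, hg₀ T]

lemma sampleProb_or_le (hp₀ : 0 ≤ p) (hp₁ : p ≤ 1) (A : Finset V) (P Q : Finset V → Prop)
    [DecidablePred P] [DecidablePred Q] :
    sampleProb p A (fun T => P T ∨ Q T) ≤ sampleProb p A P + sampleProb p A Q := by
  rw [sampleProb, sampleProb, sampleProb, ← sampleExp_add]
  exact sampleExp_mono hp₀ hp₁ fun T _ => by split_ifs <;> simp_all

lemma sampleProb_lt_le_exp (hp₀ : 0 ≤ p) (hp₁ : p ≤ 1) (A : Finset V) (X : Finset V → ℝ)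
    (a : ℝ) {t : ℝ} (ht : 0 ≤ t) :
    sampleProb p A (fun T => a < X T)
      ≤ Real.exp (-(t * a)) * sampleExp p A (fun T => Real.exp (t * X T)) := by
  rw [← sampleExp_const_mul]
  refine sampleProb_le_sampleExp hp₀ hp₁ (fun T => by positivity) fun T hT => ?_
  rw [← Real.exp_add, Real.one_le_exp_iff]
  nlinarith

lemma exists_forall_not_of_sum_sampleProb_lt_one (hp₀ : 0 ≤ p) (hp₁ : p ≤ 1) (A : Finset V)
    {ι : Type*} (s : Finset ι) (P : ι → Finset V → Prop) [∀ i, DecidablePred (P i)]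
    (hs : ∑ i ∈ s, sampleProb p A (P i) < 1) : ∃ T ⊆ A, ∀ i ∈ s, ¬P i T := by
  by_contra! hbad
  have hcover : ∀ T ⊆ A, (1 : ℝ) ≤ ∑ i ∈ s, if P i T then 1 else 0 := fun T hT => by
    obtain ⟨i, hi, hPi⟩ := hbad T hT
    exact (if_pos hPi).symm.le.trans
      (single_le_sum (f := fun i => if P i T then (1 : ℝ) else 0)
        (fun j _ => by split_ifs <;> norm_num) hi)
  have := sampleExp_mono hp₀ hp₁ hcover
  rw [sampleExp_const, sampleExp_sum] at this
  exact hs.not_ge this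

lemma sampleProb_pair_subset [DecidableEq V] {u v : V} (huv : u ≠ v) :
    sampleProb p {u, v} (fun T => {u, v} ⊆ T) = p ^ 2 := by
  have hu : ¬({u, v} : Finset V) ⊆ {u} := fun h => huv (mem_singleton.mp (h (by simp))).symm
  have hv : ¬({u, v} : Finset V) ⊆ {v} := fun h => huv (mem_singleton.mp (h (by simp)))
  simp [sampleProb, sampleExp_pair huv, hu, hv]

lemma sampleProb_pair_not_disjoint [DecidableEq V] {u v : V} (huv : u ≠ v) :
    sampleProb p {u, v} (fun T => ¬Disjoint {u, v} T) = 1 - (1 - p) ^ 2 := by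
  simp [sampleProb, sampleExp_pair huv]
  ring

/-- By `hQ` the event `Q D T` only depends on `T ∩ D`, so the events on the disjoint blocks `B i`
are independent and their count has the moment generating function of a binomial variable. -/
lemma sampleExp_exp_mul_card_filter_le [Fintype V] [DecidableEq V] (hp₀ : 0 ≤ p) (hp₁ : p ≤ 1)
    {ι : Type*} (K : Finset ι) {B : ι → Finset V} (hB : (K : Set ι).PairwiseDisjoint B)
    (Q : Finset V → Finset V → Prop) [∀ D T, Decidable (Q D T)] (hQ : ∀ D T, Q D (T ∩ D) ↔ Q D T)
    {q : ℝ} (hq : ∀ i ∈ K, sampleProb p (B i) (Q (B i)) = q) (t : ℝ) :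
    sampleExp p univ (fun T => Real.exp (t * #{i ∈ K | Q (B i) T}))
      ≤ Real.exp (#K * q * (Real.exp t - 1)) := by
  set g : ι → Finset V → ℝ := fun i U => Real.exp (t * if Q (B i) U then 1 else 0)
  have hsplit : ∀ T, Real.exp (t * #{i ∈ K | Q (B i) T}) = ∏ i ∈ K, g i (T ∩ B i) := fun T => by
    rw [card_filter]
    push_cast
    rw [mul_sum, Real.exp_sum]
    exact prod_congr rfl fun i _ => by simp only [g, hQ]
  have hfactor : ∀ i ∈ K, sampleExp p (B i) (g i) = 1 + q * (Real.exp t - 1) := fun i hi => by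
    have hg : g i = fun U => (if Q (B i) U then 1 else 0) * (Real.exp t - 1) + 1 :=
      funext fun U => by by_cases h : Q (B i) U <;> simp [g, h]
    rw [hg, sampleExp_add, sampleExp_mul_const, sampleExp_const, ← sampleProb, hq i hi]
    ring
  simp only [hsplit]
  rw [sampleExp_prod_inter K (fun _ _ => subset_univ _) hB, mul_assoc, Real.exp_nat_mul,
    ← prod_const]
  refine prod_le_prod (fun i _ => sampleExp_nonneg hp₀ hp₁ fun _ _ => (Real.exp_pos _).le)
    fun i hi => ?_
  rw [hfactor i hi, add_comm]
  exact Real.add_one_le_exp _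

end Sampling

section Matchings

variable {V E C : Type*} [DecidableEq V] {e₁ e₂ : E → V}

@[simp]
lemma mem_colourClass [Fintype E] {col : E → C} {c : C} {e : E} :
    e ∈ colourClass col c ↔ col e = c := by
  simp [colourClass]

lemma IsMatchingE.pairwiseDisjoint {M : Finset E} (hM : IsMatchingE e₁ e₂ M) :
    (M : Set E).PairwiseDisjoint (edgeEnds e₁ e₂) :=
  fun a ha b hb hab => hM.2 a ha b hb hab

lemma IsMatchingE.subset {M N : Finset E} (hN : IsMatchingE e₁ e₂ N) (hMN : M ⊆ N) :
    IsMatchingE e₁ e₂ M :=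
  ⟨fun e he => hN.1 e (hMN he), fun a ha b hb => hN.2 a (hMN ha) b (hMN hb)⟩

lemma IsMatchingE.union {M N : Finset E} [DecidableEq E] (hM : IsMatchingE e₁ e₂ M)
    (hN : IsMatchingE e₁ e₂ N)
    (hMN : ∀ a ∈ M, ∀ b ∈ N, Disjoint (edgeEnds e₁ e₂ a) (edgeEnds e₁ e₂ b)) :
    IsMatchingE e₁ e₂ (M ∪ N) := by
  refine ⟨fun e he => (mem_union.mp he).elim (hM.1 e) (hN.1 e), fun a ha b hb hab => ?_⟩
  rcases mem_union.mp ha with ha | ha <;> rcases mem_union.mp hb with hb | hb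
  exacts [hM.2 a ha b hb hab, hMN a ha b hb, (hMN b hb a ha).symm, hN.2 a ha b hb hab]

lemma card_matchedVerts_le (M : Finset E) : #(matchedVerts e₁ e₂ M) ≤ 2 * #M :=
  (card_biUnion_le).trans <| (sum_le_sum fun e _ => card_le_two).trans_eq
    (by rw [sum_const, smul_eq_mul, mul_comm])

/-- Each vertex of `W` lies on at most one edge of a matching. -/
lemma card_filter_not_disjoint_le {M : Finset E} (hM : IsMatchingE e₁ e₂ M) (W : Finset V) :
    #{e ∈ M | ¬Disjoint (edgeEnds e₁ e₂ e) W} ≤ #W :=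
  calc #{e ∈ M | ¬Disjoint (edgeEnds e₁ e₂ e) W}
      ≤ #({e ∈ M | ¬Disjoint (edgeEnds e₁ e₂ e) W}.biUnion fun e => edgeEnds e₁ e₂ e ∩ W) :=
        card_le_card_biUnion
          ((hM.pairwiseDisjoint.subset (coe_subset.mpr (filter_subset _ _))).mono
            fun _ => inter_subset_left)
          fun _ he => not_disjoint_iff_nonempty_inter.mp (mem_filter.mp he).2
    _ ≤ #W := card_le_card (biUnion_subset.mpr fun _ _ => inter_subset_right)

lemma IsRainbow.union {col : E → C} [DecidableEq E] [DecidableEq C] {M N : Finset E}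
    (hM : IsRainbow col M) (hN : IsRainbow col N) (hMN : Disjoint (M.image col) (N.image col)) :
    IsRainbow col (M ∪ N) := by
  intro a ha b hb hab
  simp only [coe_union, Set.mem_union, mem_coe] at ha hb
  rcases ha with ha | ha <;> rcases hb with hb | hb
  · exact hM ha hb hab
  · exact (disjoint_left.mp hMN (mem_image_of_mem col ha) (hab ▸ mem_image_of_mem col hb)).elim
  · exact (disjoint_left.mp hMN (mem_image_of_mem col hb) (hab ▸ mem_image_of_mem col ha)).elim
  · exact hN ha hb hab

end Matchings

section Chernoff

variable {V E : Type*} [Fintype V] [DecidableEq V] {p : ℝ} (hp₀ : 0 ≤ p) (hp₁ : p ≤ 1)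
  {e₁ e₂ : E → V} {M : Finset E}
include hp₀ hp₁

lemma sampleProb_card_subset_lt_le (hM : IsMatchingE e₁ e₂ M) (a : ℝ) {t : ℝ} (ht : 0 ≤ t) :
    sampleProb p univ (fun S => (#{e ∈ M | edgeEnds e₁ e₂ e ⊆ S} : ℝ) < a)
      ≤ Real.exp (t * a + #M * p ^ 2 * (Real.exp (-t) - 1)) := by
  have hmgf := sampleExp_exp_mul_card_filter_le hp₀ hp₁ M (B := edgeEnds e₁ e₂)
    hM.pairwiseDisjoint (· ⊆ ·) (fun D T => by simp only [subset_inter_iff, subset_refl, and_true])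
    (q := p ^ 2) (fun e he => sampleProb_pair_subset (hM.1 e he)) (-t)
  calc sampleProb p univ (fun S => (#{e ∈ M | edgeEnds e₁ e₂ e ⊆ S} : ℝ) < a)
      = sampleProb p univ (fun S => -a < -(#{e ∈ M | edgeEnds e₁ e₂ e ⊆ S} : ℝ)) := by
        simp only [neg_lt_neg_iff]
    _ ≤ Real.exp (-(t * -a)) * Real.exp (#M * p ^ 2 * (Real.exp (-t) - 1)) := by
        refine (sampleProb_lt_le_exp hp₀ hp₁ _ _ _ ht).trans
          (mul_le_mul_of_nonneg_left ?_ (Real.exp_pos _).le)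
        simpa only [mul_neg, neg_mul] using hmgf
    _ = _ := by rw [← Real.exp_add]; ring_nf

lemma sampleProb_lt_card_not_disjoint_le (hM : IsMatchingE e₁ e₂ M) (L : ℝ) {t : ℝ} (ht : 0 ≤ t) :
    sampleProb p univ (fun S => L < #{e ∈ M | ¬Disjoint (edgeEnds e₁ e₂ e) S})
      ≤ Real.exp (-(t * L) + #M * (1 - (1 - p) ^ 2) * (Real.exp t - 1)) := by
  have hmgf := sampleExp_exp_mul_card_filter_le hp₀ hp₁ M (B := edgeEnds e₁ e₂)
    hM.pairwiseDisjoint (fun D T => ¬Disjoint D T)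
    (fun D T => by
      simp only [disjoint_iff_inter_eq_empty, inter_comm T D, ← inter_assoc, inter_self])
    (q := 1 - (1 - p) ^ 2) (fun e he => sampleProb_pair_not_disjoint (hM.1 e he)) t
  rw [Real.exp_add]
  exact (sampleProb_lt_le_exp hp₀ hp₁ _ _ _ ht).trans
    (mul_le_mul_of_nonneg_left hmgf (Real.exp_pos _).le)

end Chernoff

section Estimates

variable {x : ℝ}

lemma exp_sub_one_le_add_sq {y : ℝ} (hy : |y| ≤ 1) : Real.exp y - 1 ≤ y + y ^ 2 := by
  linarith [(abs_le.mp (Real.abs_exp_sub_one_sub_id_le hy)).2]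

lemma lower_tail_exponent_le (hx : 10 ^ 4 ≤ x) {k : ℝ} (hk : x ^ 16 ≤ k) :
    1 / x * (41 * x ^ 14) + k * (7 / x) ^ 2 * (Real.exp (-(1 / x)) - 1) ≤ -(7 * x ^ 13) := by
  have hx₀ : 0 < x := by linarith
  have hexp : Real.exp (-(1 / x)) - 1 ≤ -(1 / x) + 1 / x ^ 2 := by
    have := exp_sub_one_le_add_sq (y := -(1 / x))
      (by rw [abs_neg, abs_of_pos (by positivity), div_le_one hx₀]; linarith)
    rwa [neg_sq, div_pow, one_pow] at this
  have hneg : -(1 / x) + 1 / x ^ 2 ≤ 0 := by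
    have : 1 / x ^ 2 ≤ 1 / x := one_div_le_one_div_of_le hx₀ (by nlinarith)
    linarith
  calc 1 / x * (41 * x ^ 14) + k * (7 / x) ^ 2 * (Real.exp (-(1 / x)) - 1)
      ≤ 1 / x * (41 * x ^ 14) + x ^ 16 * (7 / x) ^ 2 * (-(1 / x) + 1 / x ^ 2) := by
        have hk₀ : 0 ≤ k * (7 / x) ^ 2 := mul_nonneg (by linarith [pow_pos hx₀ 16]) (sq_nonneg _)
        gcongr 1 / x * (41 * x ^ 14) + ?_
        calc k * (7 / x) ^ 2 * (Real.exp (-(1 / x)) - 1)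
            ≤ k * (7 / x) ^ 2 * (-(1 / x) + 1 / x ^ 2) := mul_le_mul_of_nonneg_left hexp hk₀
          _ ≤ x ^ 16 * (7 / x) ^ 2 * (-(1 / x) + 1 / x ^ 2) :=
            mul_le_mul_of_nonpos_right (by gcongr) hneg
    _ = -(8 * x ^ 13) + 49 * x ^ 12 := by field_simp; ring
    _ ≤ -(7 * x ^ 13) := by nlinarith [pow_pos hx₀ 12]

lemma upper_tail_exponent_le (hx : 10 ^ 4 ≤ x) {k : ℝ} (hk : x ^ 16 + 20 * x ^ 15 ≤ k) :
    -(1 / x * (k - x ^ 16 - 20 * x ^ 14)) + k * (1 - (1 - 7 / x) ^ 2) * (Real.exp (1 / x) - 1)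
      ≤ -(5 * x ^ 14) := by
  have hx₀ : 0 < x := by linarith
  have hk₀ : 0 ≤ k := by linarith [pow_pos hx₀ 16, pow_pos hx₀ 15]
  have hexp : Real.exp (1 / x) - 1 ≤ 1 / x + 1 / x ^ 2 := by
    have := exp_sub_one_le_add_sq (y := 1 / x)
      (by rw [abs_of_pos (by positivity), div_le_one hx₀]; linarith)
    rwa [div_pow, one_pow] at this
  have hq : 1 - (1 - 7 / x) ^ 2 ≤ 14 / x := by
    have : 1 - (1 - 7 / x) ^ 2 = 14 / x - (7 / x) ^ 2 := by ring
    linarith [sq_nonneg (7 / x)]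
  have hq₀ : 0 ≤ 1 - (1 - 7 / x) ^ 2 := by
    have : 7 / x ≤ 1 := by rw [div_le_one hx₀]; linarith
    nlinarith [div_nonneg (by norm_num : (0 : ℝ) ≤ 7) hx₀.le]
  have hexp₀ : 0 ≤ Real.exp (1 / x) - 1 := by
    linarith [Real.add_one_le_exp (1 / x), one_div_pos.mpr hx₀]
  calc -(1 / x * (k - x ^ 16 - 20 * x ^ 14)) + k * (1 - (1 - 7 / x) ^ 2) * (Real.exp (1 / x) - 1)
      ≤ -(1 / x * (k - x ^ 16 - 20 * x ^ 14)) + k * (14 / x) * (1 / x + 1 / x ^ 2) := by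
        gcongr
    _ = -((k * (x ^ 2 - 14 * x - 14) - x ^ 18 - 20 * x ^ 16) / x ^ 3) := by field_simp; ring
    _ ≤ -(5 * x ^ 17 / x ^ 3) := by
        gcongr
        have hc : 0 ≤ x ^ 2 - 14 * x - 14 := by nlinarith
        have h15 : x ^ 15 ≤ x ^ 16 := pow_le_pow_right₀ (by linarith) (by norm_num)
        have h16 : 10 ^ 4 * x ^ 16 ≤ x ^ 17 := by
          rw [pow_succ]; nlinarith [pow_pos hx₀ 16]
        nlinarith [mul_le_mul_of_nonneg_right hk hc]
    _ = -(5 * x ^ 14) := by field_simp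

lemma card_mul_exp_lt_one (hx : 10 ^ 4 ≤ x) {N : ℝ} (hN : N ≤ x ^ 16) :
    N * (Real.exp (-(7 * x ^ 13)) + Real.exp (-(5 * x ^ 14))) < 1 := by
  have hx₀ : 0 < x := by linarith
  have h13 := pow_pos hx₀ 13
  have hexp : Real.exp (-(5 * x ^ 14)) ≤ Real.exp (-(7 * x ^ 13)) :=
    Real.exp_le_exp.mpr (by nlinarith)
  have hbig : 2 * x ^ 16 < Real.exp (7 * x ^ 13) := by
    refine lt_of_lt_of_le ?_ (Real.quadratic_le_exp_of_nonneg (by positivity))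
    have : x ^ 16 ≤ x ^ 26 := pow_le_pow_right₀ (by linarith) (by norm_num)
    nlinarith [pow_pos hx₀ 16]
  calc N * (Real.exp (-(7 * x ^ 13)) + Real.exp (-(5 * x ^ 14)))
      ≤ x ^ 16 * (2 * Real.exp (-(7 * x ^ 13))) := by
        gcongr
        linarith
    _ < 1 := by
        rw [Real.exp_neg, ← mul_assoc, mul_inv_lt_iff₀ (Real.exp_pos _)]
        linarith

end Estimates

section GoodSample

variable {V E C : Type*} [Fintype V] [DecidableEq V] [Fintype E] [Fintype C]

lemma exists_good_sample (e₁ e₂ : E → V) (col : E → C) {x : ℝ} (hx : 10 ^ 4 ≤ x)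
    (hC : (Fintype.card C : ℝ) ≤ x ^ 16)
    (hcol : ∀ c, IsMatchingE e₁ e₂ (colourClass col c) ∧
      x ^ 16 + 20 * x ^ 15 ≤ #(colourClass col c)) :
    ∃ S : Finset V, ∀ c, 41 * x ^ 14 ≤ #{e ∈ colourClass col c | edgeEnds e₁ e₂ e ⊆ S} ∧
      x ^ 16 + 20 * x ^ 14 ≤ #{e ∈ colourClass col c | Disjoint (edgeEnds e₁ e₂ e) S} := by
  have hx₀ : 0 < x := by linarith
  have hp₀ : 0 ≤ 7 / x := by positivity
  have hp₁ : 7 / x ≤ 1 := by rw [div_le_one hx₀]; linarith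
  have ht : 0 ≤ 1 / x := by positivity
  have hbad : ∀ c, sampleProb (7 / x) univ (fun S =>
      (#{e ∈ colourClass col c | edgeEnds e₁ e₂ e ⊆ S} : ℝ) < 41 * x ^ 14 ∨
      (#(colourClass col c) - x ^ 16 - 20 * x ^ 14 : ℝ)
        < #{e ∈ colourClass col c | ¬Disjoint (edgeEnds e₁ e₂ e) S})
      ≤ Real.exp (-(7 * x ^ 13)) + Real.exp (-(5 * x ^ 14)) := fun c => by
    obtain ⟨hM, hcard⟩ := hcol c
    refine (sampleProb_or_le hp₀ hp₁ _ _ _).trans (add_le_add ?_ ?_)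
    · refine (sampleProb_card_subset_lt_le hp₀ hp₁ hM _ ht).trans (Real.exp_le_exp.mpr ?_)
      exact lower_tail_exponent_le hx (by linarith [pow_pos hx₀ 15])
    · refine (sampleProb_lt_card_not_disjoint_le hp₀ hp₁ hM _ ht).trans (Real.exp_le_exp.mpr ?_)
      exact upper_tail_exponent_le hx hcard
  obtain ⟨S, -, hS⟩ := exists_forall_not_of_sum_sampleProb_lt_one hp₀ hp₁ univ univ _ <|
    calc _ ≤ ∑ _c : C, (Real.exp (-(7 * x ^ 13)) + Real.exp (-(5 * x ^ 14))) :=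
          sum_le_sum fun c _ => hbad c
      _ < 1 := by
          rw [sum_const, card_univ, nsmul_eq_mul]
          exact card_mul_exp_lt_one hx hC
  refine ⟨S, fun c => ?_⟩
  obtain ⟨hin, hout⟩ := not_or.mp (hS c (mem_univ c))
  have hsplit : (#(colourClass col c) : ℝ)
      = #{e ∈ colourClass col c | Disjoint (edgeEnds e₁ e₂ e) S}
        + #{e ∈ colourClass col c | ¬Disjoint (edgeEnds e₁ e₂ e) S} := by
    exact_mod_cast (card_filter_add_card_filter_not _).symm
  constructor <;> linarith

end GoodSample

section Completion

variable {V E C : Type*} [DecidableEq V] [Fintype E] [DecidableEq E] [DecidableEq C]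
  {e₁ e₂ : E → V} {col : E → C}

/-- Greedy completion: `2 * #D` edges of each colour of `D` inside `S` leave, for each new colour,
an edge avoiding the at most `2 * (#D - 1)` vertices already used. -/
lemma exists_rainbow_matching_inside (S : Finset V) (D : Finset C)
    (hcol : ∀ c ∈ D, IsMatchingE e₁ e₂ (colourClass col c))
    (hD : ∀ c ∈ D, 2 * #D ≤ #{e ∈ colourClass col c | edgeEnds e₁ e₂ e ⊆ S}) :
    ∃ N : Finset E, IsMatchingE e₁ e₂ N ∧ IsRainbow col N ∧ N.image col = D ∧
      ∀ e ∈ N, edgeEnds e₁ e₂ e ⊆ S := by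
  induction D using Finset.induction with
  | empty => exact ⟨∅, by simp [IsMatchingE], by simp [IsRainbow], by simp, by simp⟩
  | insert c D hc ih =>
    have hcard : #(insert c D) = #D + 1 := card_insert_of_notMem hc
    obtain ⟨N, hN, hNr, hNc, hNS⟩ := ih (fun c' hc' => hcol c' (mem_insert_of_mem hc'))
      fun c' hc' => by have := hD c' (mem_insert_of_mem hc'); omega
    have hNcard : #N = #D := by rw [← hNc, card_image_of_injOn hNr]
    have hcolc := hcol c (mem_insert_self c D)
    have hK := hD c (mem_insert_self c D)
    set K := {e ∈ colourClass col c | edgeEnds e₁ e₂ e ⊆ S}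
    obtain ⟨e, he, hfree⟩ := exists_mem_notMem_of_card_lt_card <|
      calc #{e ∈ K | ¬Disjoint (edgeEnds e₁ e₂ e) (matchedVerts e₁ e₂ N)}
          ≤ #(matchedVerts e₁ e₂ N) :=
            card_filter_not_disjoint_le (hcolc.subset (filter_subset _ _)) _
        _ < #K := by
            have := card_matchedVerts_le (e₁ := e₁) (e₂ := e₂) N
            omega
    obtain ⟨hec, heS⟩ := mem_filter.mp he
    have hecol : col e = c := mem_colourClass.mp hec
    have hdisj : Disjoint (edgeEnds e₁ e₂ e) (matchedVerts e₁ e₂ N) := by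
      by_contra h
      exact hfree (mem_filter.mpr ⟨he, h⟩)
    refine ⟨{e} ∪ N, ?_, ?_, ?_, ?_⟩
    · refine IsMatchingE.union ⟨?_, ?_⟩ hN fun a ha b hb => ?_
      · simpa using hcolc.1 e hec
      · simp
      · rw [mem_singleton.mp ha]
        exact hdisj.mono_right (subset_biUnion_of_mem (edgeEnds e₁ e₂) hb)
    · refine IsRainbow.union (by simp [IsRainbow]) hNr ?_
      rwa [image_singleton, hecol, hNc, disjoint_singleton_left]
    · rw [image_union, hNc, image_singleton, hecol, singleton_union]
    · simpa [heS] using hNS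

lemma exists_full_rainbow_matching [Fintype C] (S : Finset V) {M₀ : Finset E}
    (hM₀ : IsMatchingE e₁ e₂ M₀) (hM₀r : IsRainbow col M₀)
    (hM₀S : ∀ e ∈ M₀, Disjoint (edgeEnds e₁ e₂ e) S)
    (hcol : ∀ c, IsMatchingE e₁ e₂ (colourClass col c))
    (hS : ∀ c,
      2 * ((Fintype.card C : ℝ) - #M₀) ≤ #{e ∈ colourClass col c | edgeEnds e₁ e₂ e ⊆ S}) :
    ∃ M : Finset E, IsMatchingE e₁ e₂ M ∧ IsRainbow col M ∧ ∀ c, ∃ e ∈ M, col e = c := by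
  set D := univ \ M₀.image col
  have hM₀card : #(M₀.image col) = #M₀ := card_image_of_injOn hM₀r
  have hD : (#D : ℝ) = Fintype.card C - #M₀ := by
    rw [card_sdiff_of_subset (subset_univ _), card_univ, hM₀card,
      Nat.cast_sub (hM₀card ▸ card_le_univ _)]
  obtain ⟨N, hN, hNr, hNc, hNS⟩ := exists_rainbow_matching_inside S D (fun c _ => hcol c)
    fun c _ => by exact_mod_cast (hD ▸ hS c : (2 * #D : ℝ) ≤ _)
  refine ⟨M₀ ∪ N, hM₀.union hN fun a ha b hb => (hM₀S a ha).mono_right (hNS b hb),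
    hM₀r.union hNr (hNc ▸ disjoint_sdiff), fun c => ?_⟩
  have : c ∈ (M₀ ∪ N).image col := by
    rw [image_union, hNc, union_sdiff_of_subset (subset_univ _)]
    exact mem_univ c
  simpa using this

end Completion

section Restriction

variable {V E E' C : Type*} [DecidableEq V] {e₁ e₂ : E → V} {col : E → C}

lemma isMatchingE_map_iff (f : E' ↪ E) {M : Finset E'} :
    IsMatchingE (e₁ ∘ f) (e₂ ∘ f) M ↔ IsMatchingE e₁ e₂ (M.map f) := by
  simp only [IsMatchingE, forall_mem_map, edgeEnds, Function.comp_apply, f.injective.ne_iff]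

lemma IsRainbow.map (f : E' ↪ E) {M : Finset E'} (h : IsRainbow (col ∘ f) M) :
    IsRainbow col (M.map f) := by
  rw [IsRainbow, coe_map]
  exact h.image_of_comp

lemma map_colourClass_subtype [Fintype E] (P : E → Prop) [DecidablePred P] [Fintype {e // P e}]
    (c : C) :
    (colourClass (col ∘ Function.Embedding.subtype P) c).map (Function.Embedding.subtype P)
      = {e ∈ colourClass col c | P e} := by
  ext e
  simp [and_comm]

end Restriction

lemma exists_sixteenth_root {n : ℕ} (hn : 10 ^ 64 ≤ n) :
    ∃ x : ℝ, 10 ^ 4 ≤ x ∧ (n : ℝ) = x ^ 16 ∧ (n : ℝ) ^ ((15 : ℝ) / 16) = x ^ 15 ∧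
      (n : ℝ) ^ ((7 : ℝ) / 8) = x ^ 14 := by
  have hpow : ∀ k : ℕ, ((n : ℝ) ^ ((1 : ℝ) / 16)) ^ k = (n : ℝ) ^ ((k : ℝ) / 16) := fun k => by
    rw [← Real.rpow_natCast, ← Real.rpow_mul (Nat.cast_nonneg n)]
    ring_nf
  refine ⟨(n : ℝ) ^ ((1 : ℝ) / 16), ?_, ?_, ?_, ?_⟩
  · refine le_of_pow_le_pow_left₀ (by norm_num : 16 ≠ 0) (by positivity) ?_
    rw [hpow]
    norm_num
    exact_mod_cast hn
  all_goals rw [hpow]; norm_num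

/-- Theorem 5 from Theorem 8 via the sampling trick: assuming every
`m`-edge-coloured multigraph whose colour classes are matchings of size at least
`m + 20 m^{7/8}` has a rainbow matching of size at least `m - 20 m^{7/8}`, every
sufficiently large `n`-edge-coloured multigraph whose colour classes are matchings
of size at least `n + 20 n^{15/16}` has a full rainbow matching using all colours. -/
theorem stmt_10
    (bb : ∀ (m : ℕ) (V' E' : Type) [Fintype V'] [DecidableEq V'] [Fintype E'],
      ∀ (f₁ f₂ : E' → V') (col' : E' → Fin m),
        (∀ c : Fin m, IsMatchingE f₁ f₂ (colourClass col' c) ∧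
          (m : ℝ) + 20 * (m : ℝ) ^ ((7 : ℝ) / 8) ≤ (colourClass col' c).card) →
        ∃ M : Finset E', IsMatchingE f₁ f₂ M ∧ IsRainbow col' M ∧
          (m : ℝ) - 20 * (m : ℝ) ^ ((7 : ℝ) / 8) ≤ M.card) :
    ∃ n₀ : ℕ, ∀ n : ℕ, n₀ ≤ n →
      ∀ (V E : Type) [Fintype V] [DecidableEq V] [Fintype E],
        ∀ (e₁ e₂ : E → V) (col : E → Fin n),
          (∀ c : Fin n, IsMatchingE e₁ e₂ (colourClass col c) ∧
            (n : ℝ) + 20 * (n : ℝ) ^ ((15 : ℝ) / 16) ≤ (colourClass col c).card) →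
          ∃ M : Finset E, IsMatchingE e₁ e₂ M ∧ IsRainbow col M ∧
            ∀ c : Fin n, ∃ e ∈ M, col e = c := by
  refine ⟨10 ^ 64, fun n hn V E _ _ _ e₁ e₂ col hcol => ?_⟩
  obtain ⟨x, hx, hn16, hn15, hn14⟩ := exists_sixteenth_root hn
  obtain ⟨S, hS⟩ := exists_good_sample e₁ e₂ col hx (by simp [hn16])
    fun c => ⟨(hcol c).1, hn16 ▸ hn15 ▸ (hcol c).2⟩
  set f := Function.Embedding.subtype fun e => Disjoint (edgeEnds e₁ e₂ e) S
  obtain ⟨M', hM', hM'r, hM'card⟩ := bb n V _ (e₁ ∘ f) (e₂ ∘ f) (col ∘ f) fun c => by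
    have hmap := map_colourClass_subtype (col := col) (fun e => Disjoint (edgeEnds e₁ e₂ e) S) c
    refine ⟨(isMatchingE_map_iff f).mpr (hmap ▸ (hcol c).1.subset (filter_subset _ _)), ?_⟩
    rw [← card_map, hmap, hn14, hn16]
    exact (hS c).2
  refine exists_full_rainbow_matching S ((isMatchingE_map_iff f).mp hM') (hM'r.map f)
    (fun e he => ?_) (fun c => (hcol c).1) fun c => ?_
  · obtain ⟨e', -, rfl⟩ := mem_map.mp he
    exact e'.2
  · rw [card_map, Fintype.card_fin]
    linarith [(hS c).1, hn14 ▸ hM'card]
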